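/- arXiv:2010.00073 — 7 statements merged into one kernel-verified Lean document; each statement's English description precedes it below -/
import Mathlib

section
/- Fix integers k ≥ 0 and J ≥ 1, a real B > 0, and n ≥ J + k + 2. For every deterministic forecasting strategy in the noiseless feedback model — at each time t the forecaster outputs s_t as a function of θ_1,…,θ_{t−1}, after which θ_t is revealed — there exists θ ∈ ℝ^n with ‖D^{k+1}θ‖₀ ≤ J and ‖θ‖_∞ ≤ B (indeed with all entries in {−B, 0, B}) such that Σ_{t=1}^n (s_t(θ_1,…,θ_{t−1}) − θ_t)² ≥ J B² / 4. -/
/-!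
The adversary spends its first `J` rounds playing, from `{0, B}`, the value farther from the
forecast; by the triangle inequality this costs the forecaster at least `(B/2)^2` per round.
Afterwards it plays `0` forever, so every difference `D^i θ` vanishes from index `J` on and
`D^{k+1} θ` has at most `J` nonzero entries.
-/

/-- First-order discrete difference operator on sequences: `(D x)_j = x_{j+1} − x_j`.
The `i`-th order operator `D^i` is its `i`-fold iterate `diffOp^[i]`. -/
noncomputable def diffOp : (ℕ → ℝ) → (ℕ → ℝ) := fun x j => x (j + 1) - x j

noncomputable def farPoint (B v : ℝ) : ℝ := if |v - B| ≤ |v| then 0 else B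

lemma farPoint_eq_zero_or_eq (B v : ℝ) : farPoint B v = 0 ∨ farPoint B v = B := by
  unfold farPoint
  split_ifs <;> simp

lemma sq_half_le_sq_sub_farPoint (B v : ℝ) : (B / 2) ^ 2 ≤ (v - farPoint B v) ^ 2 := by
  have hB : |B| ≤ |v| + |v - B| := by simpa using abs_sub_le 0 v B
  unfold farPoint
  refine sq_le_sq.mpr ?_
  rw [abs_div, abs_two]
  split_ifs with h
  · rw [sub_zero]; linarith
  · linarith

noncomputable def adversarialSeq (s : (t : ℕ) → (Fin t → ℝ) → ℝ) (J : ℕ) (B : ℝ) (t : ℕ) : ℝ :=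
  if t < J then farPoint B (s t fun i => adversarialSeq s J B i) else 0
termination_by t
decreasing_by exact i.isLt

section adversarialSeq

variable (s : (t : ℕ) → (Fin t → ℝ) → ℝ) (J : ℕ) (B : ℝ)

lemma adversarialSeq_of_lt {t : ℕ} (ht : t < J) :
    adversarialSeq s J B t = farPoint B (s t fun i => adversarialSeq s J B i) := by
  rw [adversarialSeq, if_pos ht]

lemma adversarialSeq_of_le {t : ℕ} (ht : J ≤ t) : adversarialSeq s J B t = 0 := by
  rw [adversarialSeq, if_neg (Nat.not_lt.mpr ht)]

lemma adversarialSeq_eq_zero_or_eq (t : ℕ) :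
    adversarialSeq s J B t = 0 ∨ adversarialSeq s J B t = B := by
  rcases lt_or_ge t J with ht | ht
  · rw [adversarialSeq_of_lt s J B ht]; exact farPoint_eq_zero_or_eq _ _
  · exact Or.inl (adversarialSeq_of_le s J B ht)

lemma mul_sq_half_le_sum_sq_sub_adversarialSeq {n : ℕ} (hJn : J ≤ n) :
    J * (B / 2) ^ 2 ≤
      ∑ t ∈ Finset.range n, (s t (fun i => adversarialSeq s J B i) - adversarialSeq s J B t) ^ 2 :=
  calc (J : ℝ) * (B / 2) ^ 2 = ∑ _t ∈ Finset.range J, (B / 2) ^ 2 := by simp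
    _ ≤ ∑ t ∈ Finset.range J,
          (s t (fun i => adversarialSeq s J B i) - adversarialSeq s J B t) ^ 2 := by
        refine Finset.sum_le_sum fun t ht => ?_
        rw [adversarialSeq_of_lt s J B (Finset.mem_range.mp ht)]
        exact sq_half_le_sq_sub_farPoint _ _
    _ ≤ _ := Finset.sum_le_sum_of_subset_of_nonneg (Finset.range_subset_range.mpr hJn)
        fun _ _ _ => sq_nonneg _

end adversarialSeq

lemma diffOp_iterate_eq_zero_of_le {x : ℕ → ℝ} {N : ℕ} (hx : ∀ j, N ≤ j → x j = 0) (i : ℕ) :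
    ∀ j, N ≤ j → diffOp^[i] x j = 0 := by
  induction i with
  | zero => exact hx
  | succ i ih =>
    intro j hj
    rw [Function.iterate_succ_apply']
    simp only [diffOp]
    rw [ih j hj, ih (j + 1) (by omega), sub_zero]

lemma card_filter_diffOp_iterate_ne_zero_le {x : ℕ → ℝ} {N : ℕ} (hx : ∀ j, N ≤ j → x j = 0)
    (i m : ℕ) : ((Finset.range m).filter fun j => diffOp^[i] x j ≠ 0).card ≤ N := by
  refine (Finset.card_le_card fun j hj => ?_).trans (Finset.card_range N).le
  rw [Finset.mem_range]
  by_contra hNj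
  exact (Finset.mem_filter.mp hj).2 (diffOp_iterate_eq_zero_of_le hx i j (Nat.le_of_not_lt hNj))

theorem stmt2_general (k J : ℕ) (B : ℝ) (hB : 0 < B) (n : ℕ)
    (hn : J + k + 2 ≤ n) (s : (t : ℕ) → (Fin t → ℝ) → ℝ) :
    ∃ θ : ℕ → ℝ,
      ((Finset.range (n - (k + 1))).filter fun j => diffOp^[k + 1] θ j ≠ 0).card ≤ J ∧
      (∀ t, t < n → θ t = -B ∨ θ t = 0 ∨ θ t = B) ∧
      (∀ t, t < n → |θ t| ≤ B) ∧
      (J : ℝ) * B ^ 2 / 4 ≤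
        ∑ t : Fin n, (s t.val (fun i : Fin t.val => θ i.val) - θ t.val) ^ 2 := by
  refine ⟨adversarialSeq s J B,
    card_filter_diffOp_iterate_ne_zero_le (fun _ => adversarialSeq_of_le s J B) _ _,
    fun t _ => ?_, fun t _ => ?_, ?_⟩
  · rcases adversarialSeq_eq_zero_or_eq s J B t with h | h <;> simp [h]
  · rcases adversarialSeq_eq_zero_or_eq s J B t with h | h <;> simp [h, abs_of_pos hB, hB.le]
  · rw [Fin.sum_univ_eq_sum_range
      (fun t => ((s t fun i => adversarialSeq s J B i) - adversarialSeq s J B t) ^ 2) n]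
    linarith [mul_sq_half_le_sum_sq_sub_adversarialSeq s J B (n := n) (by omega)]

/-- Noiseless lower bound under exact sparsity: for any deterministic
forecasting strategy there exists a sequence `θ` taking values in `{−B, 0, B}` (hence
`‖θ‖_∞ ≤ B`) with `‖D^{k+1}θ‖₀ ≤ J` on which the cumulative squared error is at least
`J B² / 4`. -/
theorem stmt2 (k J : ℕ) (hJ : 1 ≤ J) (B : ℝ) (hB : 0 < B) (n : ℕ)
    (hn : J + k + 2 ≤ n) (s : (t : ℕ) → (Fin t → ℝ) → ℝ) :
    ∃ θ : ℕ → ℝ,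
      ((Finset.range (n - (k + 1))).filter fun j => diffOp^[k + 1] θ j ≠ 0).card ≤ J ∧
      (∀ t, t < n → θ t = -B ∨ θ t = 0 ∨ θ t = B) ∧
      (∀ t, t < n → |θ t| ≤ B) ∧
      (J : ℝ) * B ^ 2 / 4 ≤
        ∑ t : Fin n, (s t.val (fun i : Fin t.val => θ i.val) - θ t.val) ^ 2 :=
  stmt2_general k J B hB n hn s
end

section
/- Fix an integer k ≥ 0 and an integer t ≥ 2(k+1). Let θ ∈ ℝ^t, let θ̃ = recenter(θ), let (a, b) = pack(θ̃), and let W be any 2^l × 2^l real orthogonal matrix, where 2^l (l = ⌊log₂ t⌋) is the common length of a and b. Then there exists a constant c_k > 0 depending only on k such that (‖W a‖₂ + ‖W b‖₂)/√t ≤ c_k · t^k ‖D^{k+1} θ‖₁. -/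
/-! Extend `θ` by zero to `x : ℕ → ℝ` and let `P` be the polynomial of degree `≤ k` with
`P (j + 1) = x j` for `j ≤ k`. Then `P (j + 1)` is a column combination of the design matrix,
and `z = x - P (· + 1)` has vanishing differences of order `≤ k` at `0` and the same differences
of order `k + 1` as `x`. Summing differences `k + 1` times gives
`|θ j - P (j + 1)| ≤ t ^ k ‖D^{k+1} θ‖₁`. The least-squares residual is orthogonal to the column
space, so its Euclidean norm is at most `√t · t ^ k ‖D^{k+1} θ‖₁`; an orthogonal `W` preserves norms
and `a`, `b` are subvectors of the residual, so `c_k = 2` works. -/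

open Matrix

/-- `ℓ₁` norm of `D^{k+1} θ` for a vector `θ ∈ ℝ^t` (extended by `0` off-range;
only the in-range entries are used). -/
noncomputable def tvNorm (k t : ℕ) (θ : Fin t → ℝ) : ℝ :=
  ∑ j ∈ Finset.range (t - (k + 1)),
    |diffOp^[k + 1] (fun i => if h : i < t then θ ⟨i, h⟩ else 0) j|

/-- The `t × (k+1)` design matrix with rows `(1, j, …, j^k)`, `j = 1,…,t`. -/
noncomputable def designMatR (t m : ℕ) : Matrix (Fin t) (Fin m) ℝ :=
  Matrix.of fun j i => ((j : ℕ) + 1 : ℝ) ^ (i : ℕ)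

/-- Residual of the OLS fit of `θ` onto polynomials of degree at most `k`:
`recenter(θ) = θ − X_t (X_tᵀ X_t)⁻¹ X_tᵀ θ`. -/
noncomputable def recenter (k t : ℕ) (θ : Fin t → ℝ) : Fin t → ℝ :=
  θ - (designMatR t (k + 1)).mulVec
    (((designMatR t (k + 1))ᵀ * designMatR t (k + 1))⁻¹.mulVec
      ((designMatR t (k + 1))ᵀ.mulVec θ))

open Finset Polynomial
open scoped fwdDiff

theorem diffOp_eq_fwdDiff : diffOp = Δ_[1] := rfl

theorem fwdDiff_iter_comp_natCast {R G : Type*} [AddCommMonoidWithOne R] [AddCommGroup G]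
    (f : R → G) (n j : ℕ) : Δ_[1] ^[n] (fun m : ℕ => f m) j = Δ_[1] ^[n] f j := by
  simp [fwdDiff_iter_eq_sum_shift]

theorem Polynomial.fwdDiff_iter_eval_natCast_add_one_eq_zero {R : Type*} [CommRing R]
    {P : R[X]} {n : ℕ} (hP : P.natDegree < n) :
    Δ_[1] ^[n] (fun j : ℕ => P.eval ((j : R) + 1)) = 0 := by
  ext j
  rw [fwdDiff_iter_comp_natCast (fun r : R => P.eval (r + 1)),
    fwdDiff_iter_comp_add 1 (fun r : R => P.eval r), fwdDiff_iter_eq_zero_of_degree_lt hP]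
  rfl

theorem fwdDiff_iter_apply_zero_eq_zero {G : Type*} [AddCommGroup G] {z : ℕ → G} {n : ℕ}
    (hz : ∀ m ≤ n, z m = 0) : Δ_[1] ^[n] z 0 = 0 := by
  rw [fwdDiff_iter_eq_sum_shift]
  refine sum_eq_zero fun m hm => ?_
  rw [smul_eq_mul, mul_one, zero_add, hz m (Nat.lt_succ_iff.mp (mem_range.mp hm)), smul_zero]

theorem abs_le_sum_abs_fwdDiff {z : ℕ → ℝ} (hz : z 0 = 0) (j : ℕ) :
    |z j| ≤ ∑ m ∈ range j, |Δ_[1] z m| := by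
  have htel : z j = ∑ m ∈ range j, Δ_[1] z m := by
    simp only [fwdDiff, sum_range_sub, hz, sub_zero]
  exact htel ▸ abs_sum_le_sum_abs _ _

theorem abs_le_pow_mul_sum_abs_fwdDiff_iter (k : ℕ) {z : ℕ → ℝ}
    (hz : ∀ i ≤ k, Δ_[1] ^[i] z 0 = 0) (j : ℕ) :
    |z j| ≤ (j : ℝ) ^ k * ∑ m ∈ range (j - k), |Δ_[1] ^[k + 1] z m| := by
  induction k generalizing z j with
  | zero => simpa using abs_le_sum_abs_fwdDiff (hz 0 le_rfl) j
  | succ k ih =>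
    have hz' : ∀ i ≤ k, Δ_[1] ^[i] (Δ_[1] z) 0 = 0 := fun i hi => hz (i + 1) (by omega)
    calc |z j| ≤ ∑ m ∈ range j, |Δ_[1] z m| := abs_le_sum_abs_fwdDiff (hz 0 (Nat.zero_le _)) j
      _ ≤ ∑ _m ∈ range j, (j : ℝ) ^ k * ∑ r ∈ range (j - (k + 1)), |Δ_[1] ^[k + 2] z r| := by
        refine sum_le_sum fun m hm => (ih hz' m).trans ?_
        have hmj : m < j := mem_range.mp hm
        gcongr
        exact sum_le_sum_of_subset_of_nonneg (range_subset_range.mpr (by omega))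
          fun _ _ _ => abs_nonneg _
      _ = (j : ℝ) ^ (k + 1) * ∑ r ∈ range (j - (k + 1)), |Δ_[1] ^[k + 2] z r| := by
        rw [sum_const, card_range, nsmul_eq_mul]; ring

theorem exists_natDegree_lt_eval_natCast_add_one_eq (x : ℕ → ℝ) (n : ℕ) :
    ∃ P : ℝ[X], P.natDegree < n + 1 ∧ ∀ j ≤ n, P.eval ((j : ℝ) + 1) = x j := by
  have hinj : Set.InjOn (fun j : ℕ => (j : ℝ) + 1) (range (n + 1)) :=
    fun i _ j _ hij => by simpa using hij
  refine ⟨Lagrange.interpolate (range (n + 1)) (fun j : ℕ => (j : ℝ) + 1) x, ?_, fun j hj => ?_⟩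
  · refine Nat.lt_succ_of_le (natDegree_le_of_degree_le ?_)
    simpa using Lagrange.degree_interpolate_le x hinj
  · exact Lagrange.eval_interpolate_at_node x hinj (mem_range.mpr (Nat.lt_succ_of_le hj))

theorem designMatR_mulVec_coeff {t m : ℕ} {P : ℝ[X]} (hP : P.natDegree < m) :
    designMatR t m *ᵥ (fun i => P.coeff i) = fun j : Fin t => P.eval (((j : ℕ) : ℝ) + 1) := by
  ext j
  rw [eval_eq_sum_range' hP, ← Fin.sum_univ_eq_sum_range]
  simp only [mulVec, dotProduct, designMatR, of_apply, mul_comm]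

theorem exists_abs_sub_designMatR_mulVec_le (k t : ℕ) (θ : Fin t → ℝ) :
    ∃ c : Fin (k + 1) → ℝ, ∀ j,
      |θ j - (designMatR t (k + 1) *ᵥ c) j| ≤ (t : ℝ) ^ k * tvNorm k t θ := by
  set x : ℕ → ℝ := fun i => if h : i < t then θ ⟨i, h⟩ else 0 with hx
  obtain ⟨P, hPdeg, hPx⟩ := exists_natDegree_lt_eval_natCast_add_one_eq x k
  set q : ℕ → ℝ := fun j => P.eval ((j : ℝ) + 1)
  have hz : ∀ i ≤ k, Δ_[1] ^[i] (x - q) 0 = 0 := fun i hi =>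
    fwdDiff_iter_apply_zero_eq_zero fun m hm => sub_eq_zero.mpr (hPx m (hm.trans hi)).symm
  have hΔ : Δ_[1] ^[k + 1] (x - q) = Δ_[1] ^[k + 1] x := by
    conv_rhs => rw [← sub_add_cancel x q]
    rw [fwdDiff_iter_add, P.fwdDiff_iter_eval_natCast_add_one_eq_zero hPdeg, add_zero]
  refine ⟨fun i => P.coeff i, fun j => ?_⟩
  have hxj : θ j = x j := by simp [hx]
  rw [designMatR_mulVec_coeff hPdeg, hxj]
  calc |x j - q j| ≤ (j : ℝ) ^ k * ∑ m ∈ range (j - k), |Δ_[1] ^[k + 1] x m| :=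
        hΔ ▸ abs_le_pow_mul_sum_abs_fwdDiff_iter k hz j
    _ ≤ (t : ℝ) ^ k * tvNorm k t θ := by
        have hjt := j.isLt
        rw [tvNorm, diffOp_eq_fwdDiff]
        refine mul_le_mul (by gcongr) ?_ (sum_nonneg fun _ _ => abs_nonneg _)
          (by positivity)
        exact sum_le_sum_of_subset_of_nonneg (range_subset_range.mpr (by omega))
          fun _ _ _ => abs_nonneg _

section LeastSquares

variable {m n : Type*} [Fintype m] [Fintype n] (X : Matrix m n ℝ)

theorem transpose_mulVec_sub_mulVec_inv_eq_zero [DecidableEq n] (hX : IsUnit (Xᵀ * X).det)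
    (θ : m → ℝ) : Xᵀ *ᵥ (θ - X *ᵥ ((Xᵀ * X)⁻¹ *ᵥ (Xᵀ *ᵥ θ))) = 0 := by
  rw [mulVec_sub, mulVec_mulVec, mulVec_mulVec, mul_nonsing_inv _ hX, one_mulVec, sub_self]

theorem dotProduct_self_le_of_transpose_mulVec_eq_zero {r : m → ℝ} (hr : Xᵀ *ᵥ r = 0)
    (d : n → ℝ) : r ⬝ᵥ r ≤ (r + X *ᵥ d) ⬝ᵥ (r + X *ᵥ d) := by
  have hcross : r ⬝ᵥ X *ᵥ d = 0 := by
    rw [dotProduct_mulVec, ← mulVec_transpose, hr, zero_dotProduct]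
  have hsq : 0 ≤ X *ᵥ d ⬝ᵥ X *ᵥ d := Fintype.sum_nonneg fun _ => mul_self_nonneg _
  rw [add_dotProduct, dotProduct_add, dotProduct_add, hcross, dotProduct_comm (X *ᵥ d), hcross]
  linarith

theorem dotProduct_self_sub_mulVec_inv_le [DecidableEq n] (hX : IsUnit (Xᵀ * X).det)
    (θ : m → ℝ) (c : n → ℝ) :
    (θ - X *ᵥ ((Xᵀ * X)⁻¹ *ᵥ (Xᵀ *ᵥ θ))) ⬝ᵥ (θ - X *ᵥ ((Xᵀ * X)⁻¹ *ᵥ (Xᵀ *ᵥ θ))) ≤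
      (θ - X *ᵥ c) ⬝ᵥ (θ - X *ᵥ c) := by
  have hdecomp : θ - X *ᵥ c = (θ - X *ᵥ ((Xᵀ * X)⁻¹ *ᵥ (Xᵀ *ᵥ θ))) +
      X *ᵥ ((Xᵀ * X)⁻¹ *ᵥ (Xᵀ *ᵥ θ) - c) := by
    rw [mulVec_sub]; abel
  rw [hdecomp]
  exact dotProduct_self_le_of_transpose_mulVec_eq_zero X
    (transpose_mulVec_sub_mulVec_inv_eq_zero X hX θ) _

theorem isUnit_det_transpose_mul_self [DecidableEq n] (hX : Function.Injective X.mulVec) :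
    IsUnit (Xᵀ * X).det := by
  rw [← isUnit_iff_isUnit_det, ← conjTranspose_eq_transpose_of_trivial]
  exact (PosDef.conjTranspose_mul_self X hX).isUnit

end LeastSquares

theorem designMatR_mulVec_injective {t m : ℕ} (h : m ≤ t) :
    Function.Injective (designMatR t m).mulVec := by
  intro a b hab
  have hv : vandermonde (fun i : Fin m => ((i : ℕ) : ℝ) + 1) *ᵥ (a - b) = 0 := by
    ext i
    simpa [mulVec, dotProduct, vandermonde, designMatR, mul_sub, sum_sub_distrib, sub_eq_zero]
      using congrFun hab (Fin.castLE h i)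
  refine sub_eq_zero.mp (eq_zero_of_mulVec_eq_zero ?_ hv)
  exact det_vandermonde_ne_zero_iff.mpr fun i j hij => Fin.ext (by simpa using hij)

theorem sum_sq_recenter_le (k t : ℕ) (ht : k + 1 ≤ t) (θ : Fin t → ℝ) (c : Fin (k + 1) → ℝ) :
    ∑ j, recenter k t θ j ^ 2 ≤ ∑ j, (θ j - (designMatR t (k + 1) *ᵥ c) j) ^ 2 := by
  have h : recenter k t θ ⬝ᵥ recenter k t θ ≤
      (θ - designMatR t (k + 1) *ᵥ c) ⬝ᵥ (θ - designMatR t (k + 1) *ᵥ c) :=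
    dotProduct_self_sub_mulVec_inv_le _
      (isUnit_det_transpose_mul_self _ (designMatR_mulVec_injective ht)) θ c
  simpa only [dotProduct, sq, Pi.sub_apply] using h

theorem sum_sq_mulVec_comp_le {ι κ : Type*} [Fintype ι] [DecidableEq ι] [Fintype κ]
    {W : Matrix ι ι ℝ} (hW : Wᵀ * W = 1) (f : κ → ℝ) {e : ι → κ} (he : Function.Injective e) :
    ∑ i, (W *ᵥ (f ∘ e)) i ^ 2 ≤ ∑ j, f j ^ 2 := by
  have horth : (W *ᵥ (f ∘ e)) ⬝ᵥ (W *ᵥ (f ∘ e)) = (f ∘ e) ⬝ᵥ (f ∘ e) := by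
    rw [dotProduct_mulVec, ← mulVec_transpose, mulVec_mulVec, hW, one_mulVec]
  calc ∑ i, (W *ᵥ (f ∘ e)) i ^ 2 = ∑ i, f (e i) ^ 2 := by simpa [dotProduct, sq] using horth
    _ = ∑ j ∈ univ.map ⟨e, he⟩, f j ^ 2 := (sum_map univ ⟨e, he⟩ fun j => f j ^ 2).symm
    _ ≤ ∑ j, f j ^ 2 := sum_le_univ_sum_of_nonneg fun _ => sq_nonneg _

theorem sqrt_sum_sq_recenter_le (k t : ℕ) (ht : k + 1 ≤ t) (θ : Fin t → ℝ) :
    Real.sqrt (∑ j, recenter k t θ j ^ 2) ≤ Real.sqrt t * ((t : ℝ) ^ k * tvNorm k t θ) := by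
  obtain ⟨c, hc⟩ := exists_abs_sub_designMatR_mulVec_le k t θ
  set B := (t : ℝ) ^ k * tvNorm k t θ
  have hB : 0 ≤ B := mul_nonneg (by positivity) (sum_nonneg fun _ _ => abs_nonneg _)
  calc Real.sqrt (∑ j, recenter k t θ j ^ 2) ≤ Real.sqrt (∑ _j : Fin t, B ^ 2) :=
        Real.sqrt_le_sqrt <| (sum_sq_recenter_le k t ht θ c).trans <|
          sum_le_sum fun j _ => sq_le_sq.mpr ((hc j).trans (le_abs_self B))
    _ = Real.sqrt t * B := by
        rw [sum_const, card_univ, Fintype.card_fin, nsmul_eq_mul,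
          Real.sqrt_mul (Nat.cast_nonneg _), Real.sqrt_sq hB]

/-- Wavelet-energy lower bound for the `TV^k` distance: for `θ ∈ ℝ^t`
with `t ≥ 2(k+1)`, `θ̃ = recenter(θ)`, `(a,b) = pack(θ̃)` (the first and last `2^l`
entries with `l = ⌊log₂ t⌋`), and any orthogonal `W`,
`(‖Wa‖₂ + ‖Wb‖₂)/√t ≤ c_k · t^k ‖D^{k+1}θ‖₁` for a constant `c_k > 0` depending only
on `k`. -/
theorem stmt3 (k : ℕ) :
    ∃ c : ℝ, 0 < c ∧
      ∀ t : ℕ, 2 * (k + 1) ≤ t →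
      ∀ θ : Fin t → ℝ,
      ∀ l : ℕ, l = Nat.log2 t →
      ∀ hpow : 2 ^ l ≤ t,
      ∀ W : Matrix (Fin (2 ^ l)) (Fin (2 ^ l)) ℝ, Wᵀ * W = 1 →
        (Real.sqrt (∑ i, (W.mulVec
            (fun i : Fin (2 ^ l) => recenter k t θ (Fin.castLE hpow i)) i) ^ 2) +
         Real.sqrt (∑ i, (W.mulVec
            (fun i : Fin (2 ^ l) => recenter k t θ
              ⟨t - 2 ^ l + i.val, by have := i.isLt; omega⟩) i) ^ 2)) /
          Real.sqrt t ≤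
        c * (t : ℝ) ^ k * tvNorm k t θ := by
  refine ⟨2, two_pos, fun t ht θ l _ hpow W hW => ?_⟩
  have hpiece : ∀ e : Fin (2 ^ l) → Fin t, Function.Injective e →
      Real.sqrt (∑ i, (W *ᵥ (recenter k t θ ∘ e)) i ^ 2) ≤
        Real.sqrt t * ((t : ℝ) ^ k * tvNorm k t θ) := fun e he =>
    (Real.sqrt_le_sqrt (sum_sq_mulVec_comp_le hW _ he)).trans
      (sqrt_sum_sq_recenter_le k t (by omega) θ)
  rw [div_le_iff₀ (Real.sqrt_pos.mpr (Nat.cast_pos.mpr (by omega)))]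
  refine (add_le_add (hpiece _ (Fin.castLE_injective hpow))
    (hpiece (fun i => ⟨t - 2 ^ l + i.val, by omega⟩) fun a b hab => ?_)).trans_eq (by ring)
  exact Fin.ext (by simpa using congrArg Fin.val hab)
end

section
/- Let d ≥ 1 and let x_1,…,x_n ∈ ℝ^d satisfy ‖x_t‖₂ ≤ X for all t. Set A_t = I_d + Σ_{s=1}^{t} x_s x_sᵀ. Then Σ_{t=1}^{n} x_tᵀ A_t^{-1} x_t ≤ d · log(1 + n X² / d). -/
open Matrix

/-- `A_t = I_d + Σ_{s=1}^{t} x_s x_sᵀ` (0-based: sum over `s ≤ t`). -/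
noncomputable def vawA {d n : ℕ} (x : Fin n → Fin d → ℝ) (t : Fin n) :
    Matrix (Fin d) (Fin d) ℝ :=
  1 + ∑ s ∈ Finset.Iic t, Matrix.vecMulVec (x s) (x s)

/-! Adding the rank-one term `x xᵀ` to a positive definite `P` multiplies the determinant by
`1 + xᵀ P⁻¹ x` (matrix determinant lemma), and by Sherman–Morrison
`xᵀ (P + x xᵀ)⁻¹ x = 1 - det P / det (P + x xᵀ) ≤ log (det (P + x xᵀ) / det P)`.
Summing over `t` telescopes to `log det A_n`, and Jensen's inequality for `log` on the
eigenvalues of `A_n` gives `log det A_n ≤ d log (tr A_n / d) ≤ d log (1 + n X² / d)`. -/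

open Finset

namespace Matrix

variable {ι : Type*} [Fintype ι]

theorem posSemidef_vecMulVec_self (u : ι → ℝ) : (vecMulVec u u).PosSemidef := by
  simpa using posSemidef_vecMulVec_self_star u

variable [DecidableEq ι]

section CommRing

variable {R : Type*} [CommRing R]

theorem det_add_vecMulVec {P : Matrix ι ι R} (hP : IsUnit P.det) (u v : ι → R) :
    (P + vecMulVec u v).det = P.det * (1 + v ⬝ᵥ P⁻¹ *ᵥ u) := by
  rw [vecMulVec_eq Unit, det_add_replicateCol_mul_replicateRow hP]
  congr 1
  rw [det_unique]
  simp only [add_apply, one_apply_eq, Matrix.mul_apply, replicateRow_apply, replicateCol_apply,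
    dotProduct, mulVec, Finset.mul_sum, Finset.sum_mul]
  rw [Finset.sum_comm]
  simp only [mul_comm, mul_left_comm]

end CommRing

section Field

variable {K : Type*} [Field K]

theorem inv_add_vecMulVec_mulVec {P : Matrix ι ι K} (hP : IsUnit P.det) (u v : ι → K)
    (h : 1 + v ⬝ᵥ P⁻¹ *ᵥ u ≠ 0) :
    (P + vecMulVec u v)⁻¹ *ᵥ u = (1 + v ⬝ᵥ P⁻¹ *ᵥ u)⁻¹ • P⁻¹ *ᵥ u := by
  have : Invertible (P + vecMulVec u v) :=
    invertibleOfIsUnitDet _ (by simpa [det_add_vecMulVec hP] using hP.mul (Ne.isUnit h))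
  refine inv_mulVec_eq_vec ?_
  rw [mulVec_smul, add_mulVec, mulVec_mulVec, mul_nonsing_inv _ hP, one_mulVec,
    vecMulVec_mulVec, op_smul_eq_smul]
  have hu : u + (v ⬝ᵥ P⁻¹ *ᵥ u) • u = (1 + v ⬝ᵥ P⁻¹ *ᵥ u) • u := by rw [add_smul, one_smul]
  rw [hu, smul_smul, inv_mul_cancel₀ h, one_smul]

theorem dotProduct_inv_add_vecMulVec_mulVec {P : Matrix ι ι K} (hP : IsUnit P.det)
    (u v : ι → K) (h : 1 + v ⬝ᵥ P⁻¹ *ᵥ u ≠ 0) :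
    v ⬝ᵥ (P + vecMulVec u v)⁻¹ *ᵥ u = 1 - P.det / (P + vecMulVec u v).det := by
  rw [inv_add_vecMulVec_mulVec hP u v h, det_add_vecMulVec hP, dotProduct_smul, smul_eq_mul]
  field_simp [hP.ne_zero]
  ring

end Field

theorem PosDef.dotProduct_inv_add_vecMulVec_self_mulVec_le {P : Matrix ι ι ℝ} (hP : P.PosDef)
    (u : ι → ℝ) :
    u ⬝ᵥ (P + vecMulVec u u)⁻¹ *ᵥ u ≤
      Real.log (P + vecMulVec u u).det - Real.log P.det := by
  have hq : 0 ≤ u ⬝ᵥ P⁻¹ *ᵥ u := by simpa using hP.inv.posSemidef.dotProduct_mulVec_nonneg u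
  have hPu : (P + vecMulVec u u).PosDef := hP.add_posSemidef (posSemidef_vecMulVec_self u)
  rw [dotProduct_inv_add_vecMulVec_mulVec hP.det_pos.ne'.isUnit u u (by positivity),
    ← Real.log_div hPu.det_pos.ne' hP.det_pos.ne', ← inv_div]
  exact Real.one_sub_inv_le_log_of_pos (div_pos hPu.det_pos hP.det_pos)

theorem PosDef.sum_dotProduct_inv_add_sum_vecMulVec_mulVec_le {τ : Type*} [LinearOrder τ]
    {P : Matrix ι ι ℝ} (hP : P.PosDef) (x : τ → ι → ℝ) (S : Finset τ) :
    ∑ t ∈ S, x t ⬝ᵥ (P + ∑ s ∈ S with s ≤ t, vecMulVec (x s) (x s))⁻¹ *ᵥ x t ≤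
      Real.log (P + ∑ s ∈ S, vecMulVec (x s) (x s)).det - Real.log P.det := by
  induction S using Finset.induction_on_max with
  | empty => simp
  | insert a S ha ih =>
    have haS : a ∉ S := fun h => (ha a h).false
    have hprefix :
        ∑ t ∈ S, x t ⬝ᵥ (P + ∑ s ∈ insert a S with s ≤ t, vecMulVec (x s) (x s))⁻¹ *ᵥ x t =
          ∑ t ∈ S, x t ⬝ᵥ (P + ∑ s ∈ S with s ≤ t, vecMulVec (x s) (x s))⁻¹ *ᵥ x t :=
      sum_congr rfl fun t ht => by rw [filter_insert, if_neg (ha t ht).not_ge]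
    have hlast : {s ∈ insert a S | s ≤ a} = insert a S :=
      filter_true_of_mem fun s hs => by
        rcases mem_insert.1 hs with rfl | hs
        exacts [le_rfl, (ha s hs).le]
    have hPS : (P + ∑ s ∈ S, vecMulVec (x s) (x s)).PosDef :=
      hP.add_posSemidef (posSemidef_sum S fun s _ => posSemidef_vecMulVec_self (x s))
    have hstep : x a ⬝ᵥ (P + ∑ s ∈ insert a S, vecMulVec (x s) (x s))⁻¹ *ᵥ x a ≤
        Real.log (P + ∑ s ∈ insert a S, vecMulVec (x s) (x s)).det -
          Real.log (P + ∑ s ∈ S, vecMulVec (x s) (x s)).det := by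
      rw [sum_insert haS, add_comm (vecMulVec _ _), ← add_assoc]
      exact hPS.dotProduct_inv_add_vecMulVec_self_mulVec_le (x a)
    rw [sum_insert haS, hlast, hprefix]
    linarith

theorem PosDef.log_det_le_card_mul_log_trace_div [Nonempty ι] {A : Matrix ι ι ℝ}
    (hA : A.PosDef) :
    Real.log A.det ≤ Fintype.card ι * Real.log (A.trace / Fintype.card ι) := by
  set μ := hA.isHermitian.eigenvalues
  have hcard : (0 : ℝ) < Fintype.card ι := by exact_mod_cast Fintype.card_pos
  have hdet : A.det = ∏ i, μ i := by simpa using hA.isHermitian.det_eq_prod_eigenvalues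
  have htrace : A.trace = ∑ i, μ i := by simpa using hA.isHermitian.trace_eq_sum_eigenvalues
  have hjensen := strictConcaveOn_log_Ioi.concaveOn.le_map_sum (t := univ)
    (w := fun _ => (Fintype.card ι : ℝ)⁻¹) (p := μ) (by simp) (by simp [hcard.ne'])
    (fun i _ => hA.eigenvalues_pos i)
  simp only [smul_eq_mul, inv_mul_eq_div, ← sum_div] at hjensen
  rw [hdet, htrace, Real.log_prod fun i _ => (hA.eigenvalues_pos i).ne']
  exact (div_le_iff₀' hcard).1 hjensen

end Matrix

theorem stmt6_general (d n : ℕ) (X : ℝ)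
    (x : Fin n → Fin d → ℝ) (hx : ∀ t, Real.sqrt (∑ i, (x t i) ^ 2) ≤ X) :
    ∑ t, x t ⬝ᵥ (vawA x t)⁻¹.mulVec (x t) ≤
      (d : ℝ) * Real.log (1 + (n : ℝ) * X ^ 2 / (d : ℝ)) := by
  obtain rfl | hd := d.eq_zero_or_pos
  · simp
  have hd' : (0 : ℝ) < d := by exact_mod_cast hd
  have : Nonempty (Fin d) := ⟨⟨0, hd⟩⟩
  have hnorm : ∀ t, x t ⬝ᵥ x t ≤ X ^ 2 := fun t => by
    simpa [dotProduct, sq] using (Real.sqrt_le_iff.1 (hx t)).2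
  set A := 1 + ∑ s, vecMulVec (x s) (x s)
  have hA : A.PosDef := PosDef.one.add_posSemidef <|
    posSemidef_sum _ fun s _ => posSemidef_vecMulVec_self (x s)
  have htrace : A.trace = d + ∑ s, x s ⬝ᵥ x s := by simp [A, trace_sum]
  have htrace_le : A.trace ≤ d + n * X ^ 2 := by
    rw [htrace]
    gcongr
    simpa using sum_le_sum fun s (_ : s ∈ univ) => hnorm s
  calc ∑ t, x t ⬝ᵥ (vawA x t)⁻¹ *ᵥ x t ≤ Real.log A.det := by
        simpa [vawA, filter_ge_eq_Iic] using
          PosDef.one.sum_dotProduct_inv_add_sum_vecMulVec_mulVec_le x univ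
    _ ≤ d * Real.log (A.trace / d) := by
        simpa using hA.log_det_le_card_mul_log_trace_div
    _ ≤ d * Real.log (1 + n * X ^ 2 / d) := by
        gcongr
        · exact div_pos hA.trace_pos hd'
        rw [one_add_div hd'.ne']
        gcongr

/-- If `‖x_t‖₂ ≤ X` for all `t`, then
`Σ_{t=1}^n x_tᵀ A_t⁻¹ x_t ≤ d · log(1 + n X² / d)`. -/
theorem stmt6 (d n : ℕ) (hd : 1 ≤ d) (X : ℝ)
    (x : Fin n → Fin d → ℝ) (hx : ∀ t, Real.sqrt (∑ i, (x t i) ^ 2) ≤ X) :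
    ∑ t, x t ⬝ᵥ (vawA x t)⁻¹.mulVec (x t) ≤
      (d : ℝ) * Real.log (1 + (n : ℝ) * X ^ 2 / (d : ℝ)) :=
  stmt6_general d n X x hx
end

section
/- Let λ ≥ 0 and let α, z ∈ ℝ^n with |z_i| ≤ λ for every i. Then Σ_{i=1}^n (T_λ(α_i + z_i) − α_i)² ≤ Σ_{i=1}^n min{ α_i², 4λ² }. In particular, if α has at most s nonzero coordinates (‖α‖₀ ≤ s), then ‖T_λ(α + z) − α‖₂² ≤ 4 s λ². -/
/-- Soft-thresholding operator `T_λ(x) = sign(x) · max(|x| − λ, 0)`. -/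
noncomputable def softThreshold (lam x : ℝ) : ℝ := Real.sign x * max (|x| - lam) 0

/-!
Write `x = α + z`. Since `T_λ` moves every point by at most `λ`, the error `T_λ(x) − α` is
`(T_λ(x) − x) + z`, of size at most `2λ`. On the other hand `T_λ(x)` lies between `0` and `α`:
if `|x| ≤ λ` it is `0`, and otherwise `x` and `α` have the same sign and `T_λ(x) = x ∓ λ`
overshoots `α` by `z ∓ λ`, which does not reach past `0`. Hence the error is at most `|α|`
as well. Summing, only the coordinates in the support of `α` contribute, each by at most `4λ²`.
-/

namespace softThreshold

variable {lam x : ℝ}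

lemma eq_zero_of_abs_le (h : |x| ≤ lam) : softThreshold lam x = 0 := by
  simp [softThreshold, h]

lemma eq_sub_of_lt (hlam : 0 ≤ lam) (h : lam < x) : softThreshold lam x = x - lam := by
  have hx : 0 < x := hlam.trans_lt h
  rw [softThreshold, Real.sign_of_pos hx, abs_of_pos hx, max_eq_left (by linarith)]
  ring

lemma eq_add_of_lt_neg (hlam : 0 ≤ lam) (h : x < -lam) : softThreshold lam x = x + lam := by
  have hx : x < 0 := by linarith
  rw [softThreshold, Real.sign_of_neg hx, abs_of_neg hx, max_eq_left (by linarith)]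
  ring

lemma abs_sub_self_le (hlam : 0 ≤ lam) : |softThreshold lam x - x| ≤ lam := by
  rcases lt_or_ge lam x with h | h
  · rw [eq_sub_of_lt hlam h, sub_sub_cancel_left, abs_neg, abs_of_nonneg hlam]
  rcases lt_or_ge x (-lam) with h' | h'
  · rw [eq_add_of_lt_neg hlam h', add_sub_cancel_left, abs_of_nonneg hlam]
  · rw [eq_zero_of_abs_le (abs_le.2 ⟨h', h⟩), zero_sub, abs_neg]
    exact abs_le.2 ⟨h', h⟩

variable {a z : ℝ}

lemma abs_add_sub_le_two_mul (hz : |z| ≤ lam) : |softThreshold lam (a + z) - a| ≤ 2 * lam :=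
  calc |softThreshold lam (a + z) - a|
      = |(softThreshold lam (a + z) - (a + z)) + z| := by ring_nf
    _ ≤ |softThreshold lam (a + z) - (a + z)| + |z| := abs_add_le _ _
    _ ≤ lam + lam := add_le_add (abs_sub_self_le ((abs_nonneg z).trans hz)) hz
    _ = 2 * lam := by ring

lemma abs_add_sub_le_abs (hz : |z| ≤ lam) : |softThreshold lam (a + z) - a| ≤ |a| := by
  have hlam : 0 ≤ lam := (abs_nonneg z).trans hz
  obtain ⟨hz₁, hz₂⟩ := abs_le.1 hz
  rcases lt_or_ge lam (a + z) with h | h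
  · rw [eq_sub_of_lt hlam h, abs_of_nonpos (by linarith), abs_of_pos (by linarith)]
    linarith
  rcases lt_or_ge (a + z) (-lam) with h' | h'
  · rw [eq_add_of_lt_neg hlam h', abs_of_nonneg (by linarith), abs_of_neg (by linarith)]
    linarith
  · rw [eq_zero_of_abs_le (abs_le.2 ⟨h', h⟩), zero_sub, abs_neg]

lemma add_sub_sq_le_min (hz : |z| ≤ lam) :
    (softThreshold lam (a + z) - a) ^ 2 ≤ min (a ^ 2) (4 * lam ^ 2) := by
  have hlam : 0 ≤ lam := (abs_nonneg z).trans hz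
  refine le_min (sq_le_sq.2 ?_) ?_
  · simpa only [abs_abs] using abs_add_sub_le_abs hz
  · rw [show 4 * lam ^ 2 = (2 * lam) ^ 2 by ring]
    exact sq_le_sq.2 ((abs_add_sub_le_two_mul hz).trans (le_abs_self _))

end softThreshold

lemma Finset.sum_min_sq_le_card_support_mul {ι : Type*} [Fintype ι] (α : ι → ℝ) (c : ℝ) :
    ∑ i, min (α i ^ 2) c ≤ (Finset.univ.filter fun i => α i ≠ 0).card * c := by
  rw [← nsmul_eq_mul, ← Finset.sum_const, Finset.sum_filter]
  refine Finset.sum_le_sum fun i _ => ?_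
  split_ifs with h
  · exact min_le_right _ _
  · simp only [not_not.1 h, ne_eq, OfNat.ofNat_ne_zero, not_false_eq_true, zero_pow]
    exact min_le_left _ _

theorem stmt10_general (n : ℕ) (lam : ℝ) (α z : Fin n → ℝ)
    (hz : ∀ i, |z i| ≤ lam) :
    (∑ i, (softThreshold lam (α i + z i) - α i) ^ 2 ≤
      ∑ i, min ((α i) ^ 2) (4 * lam ^ 2)) ∧
    (∀ s : ℕ, (Finset.univ.filter fun i => α i ≠ 0).card ≤ s →
      ∑ i, (softThreshold lam (α i + z i) - α i) ^ 2 ≤ 4 * s * lam ^ 2) := by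
  have hcoord := Finset.sum_le_sum fun i (_ : i ∈ Finset.univ) =>
    softThreshold.add_sub_sq_le_min (a := α i) (hz i)
  refine ⟨hcoord, fun s hs => ?_⟩
  calc ∑ i, (softThreshold lam (α i + z i) - α i) ^ 2
      ≤ (Finset.univ.filter fun i => α i ≠ 0).card * (4 * lam ^ 2) :=
        hcoord.trans (Finset.sum_min_sq_le_card_support_mul α _)
    _ ≤ s * (4 * lam ^ 2) := by gcongr
    _ = 4 * s * lam ^ 2 := by ring

/-- Coordinatewise soft-thresholding error bound, and the
exact-sparsity consequence. -/
theorem stmt10 (n : ℕ) (lam : ℝ) (hlam : 0 ≤ lam) (α z : Fin n → ℝ)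
    (hz : ∀ i, |z i| ≤ lam) :
    (∑ i, (softThreshold lam (α i + z i) - α i) ^ 2 ≤
      ∑ i, min ((α i) ^ 2) (4 * lam ^ 2)) ∧
    (∀ s : ℕ, (Finset.univ.filter fun i => α i ≠ 0).card ≤ s →
      ∑ i, (softThreshold lam (α i + z i) - α i) ^ 2 ≤ 4 * s * lam ^ 2) :=
  stmt10_general n lam α z hz
end

section
/- Fix an integer m ≥ 1. There exists a rational constant c_m > 0, depending only on m, such that for every natural number t, det(X_tᵀ X_t) = c_m · t^m · ∏_{i=2}^{m} ( t² − (i−1)² )^{m−i+1}, where X_t is the t × m matrix whose j-th row (j = 1,…,t) is (1, j, j², …, j^{m−1}). -/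
/-!
Write `S_p` for the Faulhaber polynomial with `S_p(t) = ∑_{j=1}^t j^p`. Then `det(X_tᵀ X_t)` is the
value at `t` of `P = det (S_{i+l})_{i,l<m}`, a polynomial of degree at most `m²`. At `t = k < m`
the Gram matrix `X_kᵀ X_k` has rank at most `k`, and `S_p(-k) = -∑_{j<k} (-j)^p` makes the matrix
at `t = -k` minus a Gram matrix of `k` points as well; a matrix polynomial whose value at `a` has
nullity `d` has determinant divisible by `(X - a)^d`. Hence `P` is divisible by
`X^m ∏_{k=1}^{m-1} (X² - k²)^{m-k}`, which already has degree `m²`, so `P` is a constant multiple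
of it. The constant is positive because at `t = m` the Gram matrix is the square of a nonsingular
Vandermonde matrix.
-/

open Matrix

/-- The `t × m` polynomial design matrix whose `j`-th row (`j = 1,…,t`,
here 0-based `j+1`) is `(1, j, j², …, j^{m−1})`, over `ℚ`. -/
noncomputable def designMatQ (t m : ℕ) : Matrix (Fin t) (Fin m) ℚ :=
  Matrix.of fun j i => ((j : ℕ) + 1 : ℚ) ^ (i : ℕ)

open Polynomial Finset Module Function

theorem isCoprime_of_isUnit_sub {R : Type*} [CommRing R] {p q : R} (h : IsUnit (p - q)) :
    IsCoprime p q :=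
  ⟨↑h.unit⁻¹, -↑h.unit⁻¹, by rw [neg_mul, ← sub_eq_add_neg, ← mul_sub, h.val_inv_mul]⟩

theorem Polynomial.natDegree_bernoulli_le (n : ℕ) : (Polynomial.bernoulli n).natDegree ≤ n :=
  natDegree_sum_le_of_forall_le _ _ fun _ _ => (natDegree_monomial_le _).trans (Nat.sub_le _ _)

theorem Matrix.natDegree_det_le {R : Type*} [CommRing R] {n : Type*} [Fintype n] [DecidableEq n]
    (M : Matrix n n R[X]) (r c : n → ℕ) (h : ∀ i j, (M i j).natDegree ≤ r i + c j) :
    M.det.natDegree ≤ ∑ i, r i + ∑ j, c j := by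
  rw [det_apply]
  refine natDegree_sum_le_of_forall_le _ _ fun σ _ => ?_
  refine (natDegree_smul_le _ _).trans <| (natDegree_prod_le _ _).trans ?_
  calc ∑ i, (M (σ i) i).natDegree ≤ ∑ i, (r (σ i) + c i) := sum_le_sum fun i _ => h _ _
    _ = ∑ i, r i + ∑ j, c j := by rw [sum_add_distrib, Equiv.sum_comp σ r]

theorem Matrix.prod_dvd_det_of_forall_dvd {R : Type*} [CommRing R] {n : Type*} [Fintype n]
    [DecidableEq n] (M : Matrix n n R) (v : n → R) (h : ∀ i j, v j ∣ M i j) :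
    ∏ j, v j ∣ M.det := by
  choose B hB using h
  have hM : M = of fun i j => v j * of B i j := by ext i j; exact hB i j
  rw [hM, det_mul_row]
  exact dvd_mul_right _ _

theorem Matrix.X_sub_C_pow_finrank_dvd_det {F : Type*} [Field F] {n : Type*} [Fintype n]
    [DecidableEq n] (M : Matrix n n F[X]) (a : F) (K : Submodule F (n → F))
    (hK : ∀ v ∈ K, M.map (eval a) *ᵥ v = 0) : (X - C a) ^ finrank F K ∣ M.det := by
  -- `N` has a basis extending one of `K` as columns; the columns of `M * N` from `K` vanish at `a`.
  obtain ⟨L, hKL⟩ := K.exists_isCompl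
  let b := ((finBasis F K).prod (finBasis F L)).map (K.prodEquivOfIsCompl L hKL)
  have hbK : ∀ s, b (Sum.inl s) ∈ K := fun s => by simp [b]
  let e : Fin (finrank F K) ⊕ Fin (finrank F L) ≃ n := Fintype.equivOfCardEq <| by
    rw [← finrank_eq_card_basis b, finrank_fintype_fun_eq_card]
  let N := (Pi.basisFun F n).toMatrix (b.reindex e)
  have hN : IsUnit (C N.det) := by
    rw [← Basis.det_apply]
    exact ((Pi.basisFun F n).isUnit_det _).map C
  have hdvd : (X - C a) ^ finrank F K ∣ ((M * N.map C).submatrix e e).det := by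
    convert prod_dvd_det_of_forall_dvd _ (Sum.elim (fun _ => X - C a) fun _ => 1) ?_
    · simp [Fintype.prod_sum_type]
    rintro i (s | s)
    · rw [Sum.elim_inl, dvd_iff_isRoot]
      have := congrFun (hK _ (hbK s)) (e i)
      simpa [IsRoot, mul_apply, eval_finsetSum, N, Basis.toMatrix_apply, mulVec, dotProduct]
        using this
    · exact one_dvd _
  rwa [det_submatrix_equiv_self, det_mul,
    show (N.map C).det = C N.det from (RingHom.map_det C N).symm, hN.dvd_mul_right] at hdvd

theorem Matrix.X_sub_C_pow_dvd_det_of_map_eval_eq_mul {F : Type*} [Field F] {n κ : Type*}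
    [Fintype n] [DecidableEq n] [Fintype κ] (M : Matrix n n F[X]) (a : F) (B : Matrix n κ F)
    (A : Matrix κ n F) (h : M.map (eval a) = B * A) :
    (X - C a) ^ (Fintype.card n - Fintype.card κ) ∣ M.det := by
  have hker : Fintype.card n - Fintype.card κ ≤ finrank F (LinearMap.ker A.mulVecLin) := by
    have hrn := A.mulVecLin.finrank_range_add_finrank_ker
    have hrank : A.rank ≤ Fintype.card κ := A.rank_le_card_height
    rw [finrank_fintype_fun_eq_card] at hrn
    rw [Matrix.rank] at hrank
    omega
  refine (pow_dvd_pow _ hker).trans (X_sub_C_pow_finrank_dvd_det M a _ fun v hv => ?_)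
  have hAv : A *ᵥ v = 0 := hv
  rw [h, ← mulVec_mulVec, hAv, mulVec_zero]

-- Faulhaber's formula `∑_{j=1}^x j^p = (B_{p+1}(x + 1) - B_{p+1}(1)) / (p + 1)`.
noncomputable def powerSumPoly (p : ℕ) : ℚ[X] :=
  C ((p : ℚ) + 1)⁻¹ *
    ((Polynomial.bernoulli (p + 1)).comp (X + 1) - C ((Polynomial.bernoulli (p + 1)).eval 1))

theorem natDegree_powerSumPoly_le (p : ℕ) : (powerSumPoly p).natDegree ≤ p + 1 := by
  refine (natDegree_C_mul_le _ _).trans <| (natDegree_sub_C).trans_le ?_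
  rw [natDegree_comp, ← C_1, natDegree_X_add_C, mul_one]
  exact natDegree_bernoulli_le _

theorem powerSumPoly_eval_add_one (p : ℕ) (x : ℚ) :
    (powerSumPoly p).eval (x + 1) = (powerSumPoly p).eval x + (x + 1) ^ p := by
  have h := bernoulli_eval_one_add (p + 1) (x + 1)
  simp only [powerSumPoly, eval_mul, eval_C, eval_sub, eval_comp, eval_add, eval_X, eval_one,
    add_tsub_cancel_right] at h ⊢
  rw [add_comm 1 (x + 1)] at h
  rw [h]
  field_simp
  push_cast
  ring

theorem powerSumPoly_eval_natCast (p t : ℕ) :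
    (powerSumPoly p).eval (t : ℚ) = ∑ j ∈ range t, ((j : ℚ) + 1) ^ p := by
  induction t with
  | zero => simp [powerSumPoly]
  | succ t ih => rw [Nat.cast_succ, powerSumPoly_eval_add_one, ih, sum_range_succ]

theorem powerSumPoly_eval_neg_natCast (p k : ℕ) :
    (powerSumPoly p).eval (-(k : ℚ)) = -∑ j ∈ range k, (-(j : ℚ)) ^ p := by
  induction k with
  | zero => simp [powerSumPoly]
  | succ k ih =>
    have h := powerSumPoly_eval_add_one p (-((k : ℚ) + 1))
    rw [show -((k : ℚ) + 1) + 1 = -k by ring] at h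
    rw [Nat.cast_succ, sum_range_succ]
    linarith

noncomputable def gramPoly (m : ℕ) : Matrix (Fin m) (Fin m) ℚ[X] :=
  of fun i l => powerSumPoly (i + l)

theorem gramPoly_map_eval_natCast (m t : ℕ) :
    (gramPoly m).map (eval (t : ℚ)) = (designMatQ t m)ᵀ * designMatQ t m := by
  ext i l
  simp only [gramPoly, designMatQ, map_apply, of_apply, mul_apply, transpose_apply,
    powerSumPoly_eval_natCast, pow_add]
  exact (Fin.sum_univ_eq_sum_range
    (fun j => ((j : ℚ) + 1) ^ (i : ℕ) * ((j : ℚ) + 1) ^ (l : ℕ)) t).symm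

theorem gramPoly_map_eval_neg_natCast (m k : ℕ) :
    (gramPoly m).map (eval (-(k : ℚ))) =
      -((rectVandermonde (fun j : Fin k => -(j : ℚ)) 1 m)ᵀ *
        rectVandermonde (fun j : Fin k => -(j : ℚ)) 1 m) := by
  ext i l
  rw [Matrix.neg_apply, mul_apply]
  simp only [gramPoly, map_apply, of_apply, transpose_apply,
    rectVandermonde_apply, Pi.one_apply, one_pow, mul_one, powerSumPoly_eval_neg_natCast, pow_add]
  rw [Fin.sum_univ_eq_sum_range (fun j => (-(j : ℚ)) ^ (i : ℕ) * (-(j : ℚ)) ^ (l : ℕ)) k]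

theorem eval_det_gramPoly (m t : ℕ) :
    (gramPoly m).det.eval (t : ℚ) = ((designMatQ t m)ᵀ * designMatQ t m).det := by
  rw [← gramPoly_map_eval_natCast, ← coe_evalRingHom, RingHom.map_det]
  rfl

theorem natDegree_det_gramPoly_le (m : ℕ) : (gramPoly m).det.natDegree ≤ m * m := by
  refine ((gramPoly m).natDegree_det_le (fun i => i) (fun l => l + 1) fun i l =>
    natDegree_powerSumPoly_le _).trans_eq ?_
  rw [← sum_add_distrib, Fin.sum_univ_eq_sum_range (fun i => i + (i + 1))]
  induction m with
  | zero => rfl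
  | succ m ih => rw [sum_range_succ, ih]; ring

theorem X_sub_C_pow_dvd_det_gramPoly (m k : ℕ) :
    (X - C (k : ℚ)) ^ (m - k) ∣ (gramPoly m).det := by
  have := (gramPoly m).X_sub_C_pow_dvd_det_of_map_eval_eq_mul _ _ _ (gramPoly_map_eval_natCast m k)
  rwa [Fintype.card_fin, Fintype.card_fin] at this

theorem X_add_C_pow_dvd_det_gramPoly (m k : ℕ) :
    (X + C (k : ℚ)) ^ (m - k) ∣ (gramPoly m).det := by
  have := (gramPoly m).X_sub_C_pow_dvd_det_of_map_eval_eq_mul _ _ _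
    ((gramPoly_map_eval_neg_natCast m k).trans (Matrix.neg_mul _ _).symm)
  rwa [Fintype.card_fin, Fintype.card_fin, map_neg, sub_neg_eq_add] at this

theorem X_sq_sub_C_pow_dvd_det_gramPoly (m : ℕ) {k : ℕ} (hk : k ≠ 0) :
    (X ^ 2 - C ((k : ℚ) ^ 2)) ^ (m - k) ∣ (gramPoly m).det := by
  have hcop : IsCoprime (X - C (k : ℚ)) (X + C (k : ℚ)) := by
    rw [← sub_neg_eq_add, ← map_neg]
    exact isCoprime_X_sub_C_of_isUnit_sub (by simpa [← two_mul] using hk)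
  rw [show X ^ 2 - C ((k : ℚ) ^ 2) = (X - C (k : ℚ)) * (X + C (k : ℚ)) by rw [C_pow]; ring, mul_pow]
  exact hcop.pow.mul_dvd (X_sub_C_pow_dvd_det_gramPoly m k) (X_add_C_pow_dvd_det_gramPoly m k)

noncomputable def gramDetFactor (m : ℕ) : ℚ[X] :=
  X ^ m * ∏ i ∈ Icc 2 m, (X ^ 2 - C (((i : ℚ) - 1) ^ 2)) ^ (m - i + 1)

theorem eval_gramDetFactor (m : ℕ) (x : ℚ) :
    (gramDetFactor m).eval x =
      x ^ m * ∏ i ∈ Icc 2 m, (x ^ 2 - ((i : ℚ) - 1) ^ 2) ^ (m - i + 1) := by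
  simp [gramDetFactor, eval_prod]

theorem monic_gramDetFactor (m : ℕ) : (gramDetFactor m).Monic :=
  (monic_X_pow m).mul <| monic_prod_of_monic _ _ fun _ _ => (monic_X_pow_sub_C _ two_ne_zero).pow _

theorem natDegree_gramDetFactor (m : ℕ) : (gramDetFactor m).natDegree = m * m := by
  rw [gramDetFactor, (monic_X_pow m).natDegree_mul (monic_prod_of_monic _ _ fun _ _ =>
    (monic_X_pow_sub_C _ two_ne_zero).pow _), natDegree_X_pow,
    natDegree_prod_of_monic _ _ fun _ _ => (monic_X_pow_sub_C _ two_ne_zero).pow _]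
  simp only [natDegree_pow, natDegree_X_pow_sub_C]
  induction m with
  | zero => simp
  | succ m ih =>
    rcases m.eq_zero_or_pos with rfl | hm
    · simp
    have hshift : ∑ i ∈ Icc 2 m, (m + 1 - i + 1) * 2 = ∑ i ∈ Icc 2 m, ((m - i + 1) * 2 + 2) :=
      sum_congr rfl fun i hi => by grind
    rw [sum_Icc_succ_top (by omega), hshift, sum_add_distrib, sum_const, Nat.card_Icc, smul_eq_mul]
    have : (m + 1) * (m + 1) = m * m + 2 * m + 1 := by ring
    omega

theorem gramDetFactor_dvd_det_gramPoly (m : ℕ) : gramDetFactor m ∣ (gramPoly m).det := by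
  have hroot : ∀ i ∈ Icc 2 m,
      (X ^ 2 - C (((i : ℚ) - 1) ^ 2)) ^ (m - i + 1) ∣ (gramPoly m).det := by
    intro i hi
    obtain ⟨k, rfl⟩ : ∃ k, i = k + 1 := ⟨i - 1, by grind⟩
    rw [Nat.cast_succ, add_sub_cancel_right, show m - (k + 1) + 1 = m - k by grind]
    exact X_sq_sub_C_pow_dvd_det_gramPoly m (by grind)
  have hpair : (Icc 2 m : Set ℕ).Pairwise
      (IsCoprime on fun i => (X ^ 2 - C (((i : ℚ) - 1) ^ 2)) ^ (m - i + 1)) := by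
    intro i hi j hj hij
    refine (isCoprime_of_isUnit_sub ?_).pow
    rw [sub_sub_sub_cancel_left, ← C_sub, isUnit_C, isUnit_iff_ne_zero, sub_ne_zero]
    have hi2 : (2 : ℚ) ≤ i := by exact_mod_cast (mem_Icc.1 hi).1
    have hj2 : (2 : ℚ) ≤ j := by exact_mod_cast (mem_Icc.1 hj).1
    intro h
    have := (pow_left_inj₀ (by linarith) (by linarith) two_ne_zero).1 h
    exact hij (by exact_mod_cast (sub_left_inj.1 this).symm)
  have hX : IsCoprime (X ^ m) (∏ i ∈ Icc 2 m, (X ^ 2 - C (((i : ℚ) - 1) ^ 2)) ^ (m - i + 1)) := by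
    refine IsCoprime.prod_right fun i hi => IsCoprime.pow ?_
    have : (2 : ℚ) ≤ i := by exact_mod_cast (mem_Icc.1 hi).1
    rw [← IsCoprime.pow_left_iff two_pos]
    refine isCoprime_of_isUnit_sub ?_
    rw [sub_sub_cancel, isUnit_C, isUnit_iff_ne_zero]
    exact pow_ne_zero _ (by linarith : (0 : ℚ) < i - 1).ne'
  exact hX.mul_dvd (by simpa using X_sub_C_pow_dvd_det_gramPoly m 0)
    (prod_dvd_of_coprime hpair hroot)

theorem eval_gramDetFactor_natCast_pos (m : ℕ) : 0 < (gramDetFactor m).eval (m : ℚ) := by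
  rw [eval_gramDetFactor]
  refine mul_pos (by exact_mod_cast Nat.pow_self_pos)
    (prod_pos fun i hi => pow_pos (sub_pos.2 ?_) _)
  have hi2 : (2 : ℚ) ≤ i := by exact_mod_cast (mem_Icc.1 hi).1
  have him : (i : ℚ) ≤ m := by exact_mod_cast (mem_Icc.1 hi).2
  nlinarith

theorem det_transpose_designMatQ_mul_self_pos (m : ℕ) :
    0 < ((designMatQ m m)ᵀ * designMatQ m m).det := by
  rw [det_mul, det_transpose, ← sq, show designMatQ m m = vandermonde fun j => (j : ℚ) + 1 from rfl]
  refine pow_two_pos_of_ne_zero (det_vandermonde_ne_zero_iff.2 fun j l h => ?_)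
  exact Fin.ext (by exact_mod_cast add_right_cancel h)

theorem stmt13_general (m : ℕ) :
    ∃ c : ℚ, 0 < c ∧ ∀ t : ℕ,
      ((designMatQ t m)ᵀ * designMatQ t m).det =
        c * (t : ℚ) ^ m *
          ∏ i ∈ Finset.Icc 2 m, ((t : ℚ) ^ 2 - ((i : ℚ) - 1) ^ 2) ^ (m - i + 1) := by
  have hdet := eq_leadingCoeff_mul_of_monic_of_dvd_of_natDegree_le (monic_gramDetFactor m)
    (gramDetFactor_dvd_det_gramPoly m)
    ((natDegree_det_gramPoly_le m).trans_eq (natDegree_gramDetFactor m).symm)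
  set c := (gramPoly m).det.leadingCoeff
  have heval (t : ℕ) :
      ((designMatQ t m)ᵀ * designMatQ t m).det = c * (gramDetFactor m).eval (t : ℚ) := by
    rw [← eval_det_gramPoly, hdet, eval_mul, eval_C]
  refine ⟨c, pos_of_mul_pos_left ?_ (eval_gramDetFactor_natCast_pos m).le, fun t => ?_⟩
  · exact heval m ▸ det_transpose_designMatQ_mul_self_pos m
  · rw [heval, eval_gramDetFactor, mul_assoc]

/-- There is a positive rational constant `c_m`, depending only on `m`,
with `det(X_tᵀ X_t) = c_m · t^m · ∏_{i=2}^m (t² − (i−1)²)^{m−i+1}` for every `t`. -/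
theorem stmt13 (m : ℕ) (hm : 1 ≤ m) :
    ∃ c : ℚ, 0 < c ∧ ∀ t : ℕ,
      ((designMatQ t m)ᵀ * designMatQ t m).det =
        c * (t : ℚ) ^ m *
          ∏ i ∈ Finset.Icc 2 m, ((t : ℚ) ^ 2 - ((i : ℚ) - 1) ^ 2) ^ (m - i + 1) :=
  stmt13_general m
end

section
/- Fix an integer m ≥ 1. There exists a constant C > 0 depending only on m such that for every integer t ≥ m, the matrix X_tᵀ X_t is invertible and every entry of its inverse satisfies | ((X_tᵀ X_t)^{-1})_{ij} | ≤ C · t^{1 − i − j} for all 1 ≤ i, j ≤ m, where X_t is the t × m matrix whose j-th row (j = 1,…,t) is (1, j, j², …, j^{m−1}). -/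
/-!
Write `X_t = Y_t D_t`, where `D_t = diag(t^i)` and `Y_t` is the design matrix at the nodes
`k / t ∈ (0, 1]`. Then `(X_tᵀ X_t)⁻¹ = D_t⁻¹ (Y_tᵀ Y_t)⁻¹ D_t⁻¹`, and it suffices to show
`Y_tᵀ Y_t ≥ c t I`, since a matrix `A ≥ ε I` has inverse entries bounded by `ε⁻¹`.
For the lower bound, split the `t` nodes into `⌊t/m⌋` interleaved groups of `m` nodes whose
gaps are at least `1/(2m)`. Each group gives a Vandermonde matrix `V` with `det V ≥ (2m)^{-m²}`
and adjugate entries at most `m!`, hence `‖u‖ ≤ K ‖V u‖` with `K` depending only on `m`;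
summing over the groups gives `‖Y_t u‖² ≥ ⌊t/m⌋ ‖u‖² / K²`.
-/

open Matrix Finset
open scoped Nat

namespace Matrix

theorem dotProduct_transpose_mul_self_mulVec {m n R : Type*} [Fintype m] [Fintype n]
    [CommSemiring R] (A : Matrix m n R) (u : n → R) : u ⬝ᵥ (Aᵀ * A) *ᵥ u = A *ᵥ u ⬝ᵥ A *ᵥ u := by
  rw [← mulVec_mulVec, dotProduct_mulVec, vecMul_transpose]

section

variable {n : Type*} [Fintype n] [DecidableEq n]

theorem abs_inv_apply_le_of_abs_le_one {M : Matrix n n ℝ} (hM : ∀ i j, |M i j| ≤ 1) (i j : n) :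
    |M⁻¹ i j| ≤ (Fintype.card n)! / |M.det| := by
  have hadj : |M.adjugate i j| ≤ (Fintype.card n)! := by
    rw [adjugate_apply]
    have := det_le (abv := AbsoluteValue.abs) (x := (1 : ℝ))
      (A := M.updateRow j (Pi.single i 1)) fun p q => by
        rcases eq_or_ne p j with rfl | hp
        · rw [updateRow_self]
          rcases eq_or_ne q i with rfl | hq <;> simp [*]
        · rw [updateRow_ne hp]; exact hM p q
    simpa using this
  rw [inv_def, Ring.inverse_eq_inv', smul_apply, smul_eq_mul, abs_mul, abs_inv, div_eq_inv_mul]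
  exact mul_le_mul_of_nonneg_left hadj (inv_nonneg.2 (abs_nonneg _))

theorem dotProduct_self_le_of_abs_inv_apply_le {M : Matrix n n ℝ} (hM : IsUnit M.det) {K : ℝ}
    (hK : ∀ i j, |M⁻¹ i j| ≤ K) (u : n → ℝ) :
    u ⬝ᵥ u ≤ (Fintype.card n * K) ^ 2 * (M *ᵥ u ⬝ᵥ M *ᵥ u) := by
  set v := M *ᵥ u
  have hu : M⁻¹ *ᵥ v = u := by rw [mulVec_mulVec, nonsing_inv_mul M hM, one_mulVec]
  have hui : ∀ i, |u i| ≤ K * ∑ p, |v p| := fun i => by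
    rw [← hu, mulVec, dotProduct, mul_sum]
    refine (abs_sum_le_sum_abs _ _).trans (sum_le_sum fun p _ => ?_)
    rw [abs_mul]
    exact mul_le_mul_of_nonneg_right (hK i p) (abs_nonneg _)
  have hcs : (∑ p, |v p|) ^ 2 ≤ Fintype.card n * (v ⬝ᵥ v) := by
    simpa [dotProduct, ← sq] using
      sq_sum_le_card_mul_sum_sq (s := univ) (f := fun p => |v p|)
  calc u ⬝ᵥ u = ∑ i, |u i| ^ 2 := by simp [dotProduct, sq]
    _ ≤ ∑ _i : n, (K * ∑ p, |v p|) ^ 2 := sum_le_sum fun i _ =>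
        pow_le_pow_left₀ (abs_nonneg _) (hui i) 2
    _ = Fintype.card n * K ^ 2 * (∑ p, |v p|) ^ 2 := by simp; ring
    _ ≤ Fintype.card n * K ^ 2 * (Fintype.card n * (v ⬝ᵥ v)) := by gcongr
    _ = (Fintype.card n * K) ^ 2 * (v ⬝ᵥ v) := by ring

theorem isUnit_det_of_le_dotProduct_mulVec {A : Matrix n n ℝ} {ε : ℝ} (hε : 0 < ε)
    (hA : ∀ u, ε * (u ⬝ᵥ u) ≤ u ⬝ᵥ A *ᵥ u) : IsUnit A.det := by
  refine isUnit_iff_ne_zero.2 fun h => ?_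
  obtain ⟨v, hv, hAv⟩ := exists_mulVec_eq_zero_iff.2 h
  have hv0 : ε * (v ⬝ᵥ v) ≤ 0 := by simpa [hAv] using hA v
  refine hv (dotProduct_self_eq_zero.1 (le_antisymm (nonpos_of_mul_nonpos_right hv0 hε) ?_))
  simpa using dotProduct_star_self_nonneg v

theorem abs_inv_apply_le_of_le_dotProduct_mulVec {A : Matrix n n ℝ} {ε : ℝ} (hε : 0 < ε)
    (hA : ∀ u, ε * (u ⬝ᵥ u) ≤ u ⬝ᵥ A *ᵥ u) (i j : n) : |A⁻¹ i j| ≤ ε⁻¹ := by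
  set w := A⁻¹ *ᵥ Pi.single j 1
  have hAw : A *ᵥ w = Pi.single j 1 := by
    rw [mulVec_mulVec, mul_nonsing_inv A (isUnit_det_of_le_dotProduct_mulVec hε hA), one_mulVec]
  have hw : ∀ k, w k = A⁻¹ k j := fun k => by simp [w]
  have hwj : ε * (w ⬝ᵥ w) ≤ w j := by simpa [hAw] using hA w
  have hsq : ∀ k, w k ^ 2 ≤ w ⬝ᵥ w := fun k => by
    simpa [dotProduct, sq] using single_le_sum (fun p _ => mul_self_nonneg (w p)) (mem_univ k)
  have hS : ε ^ 2 * (w ⬝ᵥ w) ≤ 1 := by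
    have hS0 : 0 ≤ w ⬝ᵥ w := (sq_nonneg _).trans (hsq j)
    have : (ε * (w ⬝ᵥ w)) ^ 2 ≤ w ⬝ᵥ w :=
      (pow_le_pow_left₀ (by positivity) hwj 2).trans (hsq j)
    rcases hS0.eq_or_lt with h0 | hpos
    · simp [← h0]
    · exact le_of_mul_le_mul_right (by linarith) hpos
  rw [← hw]
  refine abs_le_of_sq_le_sq ?_ (inv_nonneg.2 hε.le)
  calc w i ^ 2 ≤ w ⬝ᵥ w := hsq i
    _ ≤ (ε⁻¹) ^ 2 := by rw [inv_pow, ← one_div, le_div_iff₀ (by positivity)]; linarith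

theorem inv_diagonal_of_ne_zero {K : Type*} [Field K] {d : n → K} (hd : ∀ i, d i ≠ 0) :
    (diagonal d)⁻¹ = diagonal fun i => (d i)⁻¹ :=
  inv_eq_left_inv <| by simp [diagonal_mul_diagonal, inv_mul_cancel₀ (hd _)]

theorem inv_diagonal_mul_mul_diagonal_apply {K : Type*} [Field K] {d e : n → K}
    (hd : ∀ i, d i ≠ 0) (he : ∀ i, e i ≠ 0) (B : Matrix n n K) (i j : n) :
    (diagonal d * B * diagonal e)⁻¹ i j = (e i)⁻¹ * B⁻¹ i j * (d j)⁻¹ := by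
  rw [mul_inv_rev, mul_inv_rev, inv_diagonal_of_ne_zero hd, inv_diagonal_of_ne_zero he,
    ← mul_assoc, mul_diagonal, diagonal_mul]

end

theorem pow_le_det_vandermonde {m : ℕ} {x : Fin m → ℝ} {δ : ℝ} (hδ0 : 0 ≤ δ) (hδ1 : δ ≤ 1)
    (hx : ∀ p q, p < q → δ ≤ x q - x p) : δ ^ (m * m) ≤ (vandermonde x).det := by
  rw [det_vandermonde]
  calc δ ^ (m * m) ≤ δ ^ ∑ p : Fin m, #(Ioi p) := by
        refine pow_le_pow_of_le_one hδ0 hδ1 ?_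
        simpa using sum_le_sum fun (p : Fin m) (_ : p ∈ univ) => card_le_univ (Ioi p)
    _ = ∏ p : Fin m, ∏ q ∈ Ioi p, δ := by simp [prod_pow_eq_pow_sum]
    _ ≤ ∏ p : Fin m, ∏ q ∈ Ioi p, (x q - x p) := by
        gcongr with p _ q hq
        exact hx p q (mem_Ioi.1 hq)

theorem dotProduct_self_le_vandermonde {m : ℕ} {x : Fin m → ℝ} {δ : ℝ} (hδ0 : 0 < δ)
    (hδ1 : δ ≤ 1) (hx1 : ∀ p, |x p| ≤ 1) (hx : ∀ p q, p < q → δ ≤ x q - x p) (u : Fin m → ℝ) :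
    u ⬝ᵥ u ≤ (m * m ! / δ ^ (m * m)) ^ 2 * (vandermonde x *ᵥ u ⬝ᵥ vandermonde x *ᵥ u) := by
  have hdet := pow_le_det_vandermonde hδ0.le hδ1 hx
  have hdet0 : 0 < (vandermonde x).det := (pow_pos hδ0 _).trans_le hdet
  have hinv : ∀ i j, |(vandermonde x)⁻¹ i j| ≤ m ! / δ ^ (m * m) := fun i j => by
    refine (abs_inv_apply_le_of_abs_le_one (fun p q => ?_) i j).trans ?_
    · simpa [vandermonde_apply, abs_pow] using pow_le_one₀ (abs_nonneg _) (hx1 p)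
    · rw [Fintype.card_fin, abs_of_pos hdet0]
      gcongr
  simpa [mul_div_assoc] using
    dotProduct_self_le_of_abs_inv_apply_le (isUnit_iff_ne_zero.2 hdet0.ne') hinv u

end Matrix

noncomputable def scaledDesignMatR (t m : ℕ) : Matrix (Fin t) (Fin m) ℝ :=
  of fun k i => (((k : ℕ) + 1) / t : ℝ) ^ (i : ℕ)

theorem exists_mul_dotProduct_le_scaledDesignMatR {m : ℕ} (hm : 1 ≤ m) :
    ∃ c > 0, ∀ t, m ≤ t → ∀ u : Fin m → ℝ,
      c * t * (u ⬝ᵥ u) ≤ scaledDesignMatR t m *ᵥ u ⬝ᵥ scaledDesignMatR t m *ᵥ u := by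
  have hm0 : (0 : ℝ) < m := by exact_mod_cast hm
  set δ : ℝ := 1 / (2 * m)
  have hδ0 : 0 < δ := by positivity
  have hδ1 : δ ≤ 1 := by
    rw [div_le_one (by positivity)]
    linarith [(Nat.one_le_cast (α := ℝ)).2 hm]
  set K := (m * m ! / δ ^ (m * m)) ^ 2
  have hK : 0 < K := by positivity
  refine ⟨(2 * m * K)⁻¹, by positivity, fun t ht u => ?_⟩
  set s := t / m
  have hs : 1 ≤ s := (Nat.one_le_div_iff hm).2 ht
  have hms : m * s ≤ t := Nat.mul_div_le t m
  have hts : (t : ℝ) ≤ 2 * m * s := by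
    have h1 : t < m * (s + 1) := Nat.lt_mul_div_succ t hm
    have : t ≤ 2 * m * s := by nlinarith [Nat.mul_le_mul_left m hs]
    exact_mod_cast this
  have htR : (0 : ℝ) < t := by exact_mod_cast hm.trans ht
  -- the `r`-th group consists of the nodes `r + s p`, `p < m`, with gaps at least `s / t ≥ δ`
  set g : Fin m × Fin s ↪ Fin t := finProdFinEquiv.toEmbedding.trans (Fin.castLEEmb hms)
  have hg : ∀ pr, (g pr : ℕ) = pr.2 + s * pr.1 := fun _ => rfl
  set v := scaledDesignMatR t m *ᵥ u
  have hgroup : ∀ r : Fin s, u ⬝ᵥ u ≤ K * ∑ p, v (g (p, r)) ^ 2 := by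
    intro r
    set x : Fin m → ℝ := fun p => ((g (p, r) : ℕ) + 1) / t
    have hx1 : ∀ p, |x p| ≤ 1 := fun p => by
      rw [abs_of_nonneg (by positivity), div_le_one htR]
      exact_mod_cast (g (p, r)).isLt
    have hx : ∀ p q, p < q → δ ≤ x q - x p := fun p q hpq => by
      have hqp : (1 : ℝ) ≤ (q : ℕ) - (p : ℕ) := by
        have : (p : ℕ) + 1 ≤ q := hpq
        linarith [(Nat.cast_le (α := ℝ)).2 this, Nat.cast_succ (R := ℝ) (p : ℕ)]
      simp only [x, hg]
      push_cast
      rw [div_sub_div_same, le_div_iff₀ htR]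
      have hδt : δ * t ≤ s := by
        calc δ * t ≤ δ * (2 * m * s) := by gcongr
          _ = s := by simp only [δ]; field_simp
      nlinarith [(Nat.cast_nonneg s : (0 : ℝ) ≤ s)]
    have hV : vandermonde x *ᵥ u = fun p => v (g (p, r)) := rfl
    calc u ⬝ᵥ u ≤ K * (vandermonde x *ᵥ u ⬝ᵥ vandermonde x *ᵥ u) :=
          dotProduct_self_le_vandermonde hδ0 hδ1 hx1 hx u
      _ = K * ∑ p, v (g (p, r)) ^ 2 := by simp only [hV, dotProduct, sq]
  have hsum : ∑ r : Fin s, ∑ p : Fin m, v (g (p, r)) ^ 2 ≤ v ⬝ᵥ v := by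
    rw [sum_comm, ← Fintype.sum_prod_type', ← sum_map univ g (fun k => v k ^ 2)]
    refine (sum_le_univ_sum_of_nonneg fun k => sq_nonneg (v k)).trans_eq ?_
    simp only [dotProduct, sq]
  calc (2 * m * K)⁻¹ * t * (u ⬝ᵥ u) ≤ (2 * m * K)⁻¹ * (2 * m * s) * (u ⬝ᵥ u) := by
        gcongr
        simpa using dotProduct_star_self_nonneg u
    _ = K⁻¹ * ∑ _r : Fin s, u ⬝ᵥ u := by
        rw [sum_const, card_univ, Fintype.card_fin, nsmul_eq_mul]
        field_simp
    _ ≤ K⁻¹ * ∑ r : Fin s, K * ∑ p, v (g (p, r)) ^ 2 := by gcongr with r; exact hgroup r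
    _ = ∑ r : Fin s, ∑ p, v (g (p, r)) ^ 2 := by rw [← mul_sum, inv_mul_cancel_left₀ hK.ne']
    _ ≤ v ⬝ᵥ v := hsum

theorem designMatR_eq_scaledDesignMatR_mul_diagonal {t : ℕ} (ht : t ≠ 0) (m : ℕ) :
    designMatR t m = scaledDesignMatR t m * diagonal fun i : Fin m => (t : ℝ) ^ (i : ℕ) := by
  ext k i
  simp [designMatR, scaledDesignMatR, div_pow, ht]

theorem transpose_mul_self_designMatR {t : ℕ} (ht : t ≠ 0) (m : ℕ) :
    (designMatR t m)ᵀ * designMatR t m =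
      diagonal (fun i : Fin m => (t : ℝ) ^ (i : ℕ)) *
        ((scaledDesignMatR t m)ᵀ * scaledDesignMatR t m) *
          diagonal (fun i : Fin m => (t : ℝ) ^ (i : ℕ)) := by
  rw [designMatR_eq_scaledDesignMatR_mul_diagonal ht, transpose_mul, diagonal_transpose]
  simp only [Matrix.mul_assoc]

/-- For `t ≥ m`, the Gram matrix `X_tᵀ X_t` is invertible and the
entries of its inverse are Hilbert-like: `|((X_tᵀ X_t)⁻¹)_{ij}| ≤ C · t^{1−i−j}`
(1-based indices; here `i j : Fin m` are 0-based so the exponent is `1−(i+1)−(j+1)`). -/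
theorem stmt14 (m : ℕ) (hm : 1 ≤ m) :
    ∃ C : ℝ, 0 < C ∧ ∀ t : ℕ, m ≤ t →
      IsUnit ((designMatR t m)ᵀ * designMatR t m).det ∧
      ∀ i j : Fin m,
        |(((designMatR t m)ᵀ * designMatR t m)⁻¹) i j| ≤
          C * (t : ℝ) ^ (1 - ((i : ℕ) + 1 : ℤ) - ((j : ℕ) + 1 : ℤ)) := by
  obtain ⟨c, hc, hY⟩ := exists_mul_dotProduct_le_scaledDesignMatR hm
  refine ⟨c⁻¹, inv_pos.2 hc, fun t ht => ?_⟩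
  have ht0 : (0 : ℝ) < t := by exact_mod_cast hm.trans ht
  have hd : ∀ i : Fin m, (t : ℝ) ^ (i : ℕ) ≠ 0 := fun i => by positivity
  have hct : 0 < c * t := by positivity
  have hB : ∀ u, c * t * (u ⬝ᵥ u) ≤
      u ⬝ᵥ ((scaledDesignMatR t m)ᵀ * scaledDesignMatR t m) *ᵥ u := fun u => by
    rw [dotProduct_transpose_mul_self_mulVec]; exact hY t ht u
  rw [transpose_mul_self_designMatR (Nat.one_le_iff_ne_zero.1 (hm.trans ht))]
  refine ⟨?_, fun i j => ?_⟩
  · rw [det_mul, det_mul, det_diagonal]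
    have hD : IsUnit (∏ i : Fin m, (t : ℝ) ^ (i : ℕ)) := isUnit_iff_ne_zero.2 (by positivity)
    exact (hD.mul (isUnit_det_of_le_dotProduct_mulVec hct hB)).mul hD
  have hpow : (t : ℝ) ^ (1 - ((i : ℕ) + 1 : ℤ) - ((j : ℕ) + 1 : ℤ)) =
      ((t : ℝ) ^ (i : ℕ))⁻¹ * (t : ℝ)⁻¹ * ((t : ℝ) ^ (j : ℕ))⁻¹ := by
    rw [show 1 - ((i : ℕ) + 1 : ℤ) - ((j : ℕ) + 1) = -(i : ℕ) + -1 + -(j : ℕ) by ring,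
      zpow_add₀ ht0.ne', zpow_add₀ ht0.ne', _root_.zpow_neg, _root_.zpow_neg, _root_.zpow_neg,
      zpow_natCast, zpow_natCast, zpow_one]
  rw [inv_diagonal_mul_mul_diagonal_apply hd hd, abs_mul, abs_mul, hpow,
    abs_of_pos (inv_pos.2 (pow_pos ht0 _)), abs_of_pos (inv_pos.2 (pow_pos ht0 _))]
  calc _ ≤ ((t : ℝ) ^ (i : ℕ))⁻¹ * (c * t)⁻¹ * ((t : ℝ) ^ (j : ℕ))⁻¹ := by
        gcongr
        exact abs_inv_apply_le_of_le_dotProduct_mulVec hct hB i j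
    _ = _ := by ring
end

section
/- Fix an integer m ≥ 1 and a real B > 0. There exists a constant C > 0 depending only on m and B such that for every integer t ≥ m and every θ ∈ ℝ^t with ‖θ‖_∞ ≤ B, the ordinary least squares coefficient vector satisfies ‖ (X_tᵀ X_t)^{-1} X_tᵀ θ ‖₂ ≤ C, where X_t is the t × m matrix whose j-th row (j = 1,…,t) is (1, j, j², …, j^{m−1}). -/
/-!
Let `b` be the least-squares coefficients and `p` the polynomial of degree `< m` with coefficient
vector `b`, so that `X_t b = (p(1), …, p(t))`. Being the orthogonal projection of `θ`, this vector
has `∑ p(j)² ≤ ‖θ‖₂² ≤ t B²`. Conversely, Lagrange interpolation bounds the coefficients of `p` by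
its values at any `m` nodes whose gaps are comparable to their size. With `q = ⌊t/m⌋`, the `q`
progressions `k + 1, k + 1 + q, …, k + 1 + (m-1)q` (`k < q`) are such node sets, and together they
cover `{1, …, mq}`; hence `q ‖b‖₂² ≲ ∑ p(j)² ≤ t B²`, and `t < 2mq`.
-/

open Matrix

open Polynomial Finset

lemma abs_coeff_C_mul_X_sub_C_mul_le {P : ℝ[X]} {K : ℝ} (hP : ∀ n, |P.coeff n| ≤ K)
    (c a : ℝ) (n : ℕ) : |(C c * (X - C a) * P).coeff n| ≤ |c| * (1 + |a|) * K := by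
  have hXP : |(X * P).coeff n| ≤ K := by
    cases n with
    | zero => simpa using (abs_nonneg _).trans (hP 0)
    | succ n => rw [coeff_X_mul]; exact hP n
  rw [mul_assoc, coeff_C_mul, sub_mul, coeff_sub, coeff_C_mul, abs_mul]
  calc |c| * |(X * P).coeff n - a * P.coeff n|
      ≤ |c| * (K + |a| * K) := by
        gcongr
        calc _ ≤ |(X * P).coeff n| + |a * P.coeff n| := abs_sub _ _
          _ ≤ K + |a| * K := by rw [abs_mul]; gcongr; exact hP n
    _ = |c| * (1 + |a|) * K := by ring

lemma abs_coeff_prod_C_mul_X_sub_C_le {ι : Type*} (s : Finset ι) (c a : ι → ℝ) (n : ℕ) :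
    |(∏ j ∈ s, C (c j) * (X - C (a j))).coeff n| ≤ ∏ j ∈ s, |c j| * (1 + |a j|) := by
  classical
  induction s using Finset.induction_on generalizing n with
  | empty => rw [prod_empty, prod_empty, coeff_one]; split_ifs <;> simp
  | insert i s hi ih =>
    rw [prod_insert hi, prod_insert hi]
    exact abs_coeff_C_mul_X_sub_C_mul_le ih _ _ n

lemma abs_coeff_basis_le {ι : Type*} [DecidableEq ι] {s : Finset ι} {v : ι → ℝ} {i : ι}
    (hi : i ∈ s) {M : ℝ} (hv : ∀ j ∈ s, j ≠ i → 1 + |v j| ≤ M * |v i - v j|) (n : ℕ) :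
    |(Lagrange.basis s v i).coeff n| ≤ M ^ (#s - 1) := by
  refine (abs_coeff_prod_C_mul_X_sub_C_le (s.erase i) (fun j => (v i - v j)⁻¹) v n).trans ?_
  rw [← card_erase_of_mem hi, ← prod_const]
  refine prod_le_prod (fun j _ => by positivity) fun j hj => ?_
  obtain ⟨hji, hj⟩ := mem_erase.mp hj
  have hsep := hv j hj hji
  have hne : v i ≠ v j := fun h => by
    rw [h, sub_self, abs_zero, mul_zero] at hsep
    linarith [abs_nonneg (v j)]
  rw [abs_inv, inv_mul_le_iff₀ (abs_pos.mpr (sub_ne_zero.mpr hne)), mul_comm]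
  exact hsep

lemma abs_coeff_le_mul_sum_abs_eval {ι : Type*} [DecidableEq ι] {s : Finset ι} {v : ι → ℝ}
    (hvs : Set.InjOn v s) {p : ℝ[X]} (hp : p.degree < #s) {K : ℝ}
    (hK : ∀ i ∈ s, ∀ n, |(Lagrange.basis s v i).coeff n| ≤ K) (n : ℕ) :
    |p.coeff n| ≤ K * ∑ i ∈ s, |p.eval (v i)| := by
  have hinterp := congrArg (coeff · n) (Lagrange.eq_interpolate hvs hp)
  simp only [Lagrange.interpolate_apply, finsetSum_coeff, coeff_C_mul] at hinterp
  rw [hinterp, mul_sum]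
  refine (abs_sum_le_sum_abs _ _).trans (sum_le_sum fun i hi => ?_)
  rw [abs_mul, mul_comm K]
  exact mul_le_mul_of_nonneg_left (hK i hi n) (abs_nonneg _)

lemma sum_sq_coeff_le_of_separated {m : ℕ} {p : ℝ[X]} (hp : p ∈ degreeLT ℝ m)
    {v : Fin m → ℝ} {M : ℝ} (hv : ∀ r j, j ≠ r → 1 + |v j| ≤ M * |v r - v j|) :
    ∑ i : Fin m, p.coeff i ^ 2 ≤ m ^ 2 * (M ^ (m - 1)) ^ 2 * ∑ r, p.eval (v r) ^ 2 := by
  have hvs : Set.InjOn v (univ : Finset (Fin m)) := fun r _ j _ h => by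
    by_contra hne
    have := hv j r hne
    rw [h, sub_self, abs_zero, mul_zero] at this
    linarith [abs_nonneg (v j)]
  have hdeg : p.degree < #(univ : Finset (Fin m)) := by
    simpa using mem_degreeLT.mp hp
  have hcoeff (i : Fin m) :
      p.coeff i ^ 2 ≤ (M ^ (m - 1)) ^ 2 * (m * ∑ r, p.eval (v r) ^ 2) := by
    have h := abs_coeff_le_mul_sum_abs_eval hvs hdeg
      (fun r _ n => by simpa using abs_coeff_basis_le (mem_univ r) (fun j _ => hv r j) n) i
    calc p.coeff i ^ 2 ≤ (M ^ (m - 1) * ∑ r, |p.eval (v r)|) ^ 2 := by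
          rw [← sq_abs]; exact pow_le_pow_left₀ (abs_nonneg _) h 2
      _ = (M ^ (m - 1)) ^ 2 * (∑ r, |p.eval (v r)|) ^ 2 := mul_pow ..
      _ ≤ (M ^ (m - 1)) ^ 2 * (m * ∑ r, p.eval (v r) ^ 2) := by
          gcongr
          simpa using sq_sum_le_card_mul_sum_sq (s := univ) (f := fun r => |p.eval (v r)|)
  calc ∑ i : Fin m, p.coeff i ^ 2
      ≤ ∑ _i : Fin m, (M ^ (m - 1)) ^ 2 * (m * ∑ r, p.eval (v r) ^ 2) :=
        sum_le_sum fun i _ => hcoeff i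
    _ = m ^ 2 * (M ^ (m - 1)) ^ 2 * ∑ r, p.eval (v r) ^ 2 := by
        rw [sum_const, card_univ, Fintype.card_fin, nsmul_eq_mul]; ring

lemma one_add_abs_le_mul_abs_sub_of_progression {m q k : ℕ} (hk : k < q) {r j : Fin m}
    (hjr : j ≠ r) :
    1 + |((k + q * j : ℕ) : ℝ) + 1| ≤
      2 * m * |(((k + q * r : ℕ) : ℝ) + 1) - (((k + q * j : ℕ) : ℝ) + 1)| := by
  have hdiff : (((k + q * r : ℕ) : ℝ) + 1) - (((k + q * j : ℕ) : ℝ) + 1) =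
      q * (((r : ℕ) : ℝ) - (j : ℕ)) := by
    push_cast; ring
  have hone : 1 ≤ |((r : ℕ) : ℝ) - (j : ℕ)| := by
    rw [le_abs]
    rcases Nat.lt_or_gt_of_ne (Fin.val_ne_of_ne hjr) with h | h
    · left; linarith [(Nat.cast_le (α := ℝ)).mpr (Nat.succ_le_of_lt h), Nat.cast_succ (R := ℝ) j]
    · right; linarith [(Nat.cast_le (α := ℝ)).mpr (Nat.succ_le_of_lt h), Nat.cast_succ (R := ℝ) r]
  have hnode : k + q * j + 2 ≤ 2 * m * q := by
    have := j.isLt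
    nlinarith
  calc 1 + |((k + q * j : ℕ) : ℝ) + 1| = ((k + q * j + 2 : ℕ) : ℝ) := by
        rw [abs_of_nonneg (by positivity)]; push_cast; ring
    _ ≤ ((2 * m * q : ℕ) : ℝ) := Nat.cast_le.mpr hnode
    _ = 2 * m * (q * 1) := by push_cast; ring
    _ ≤ 2 * m * |(((k + q * r : ℕ) : ℝ) + 1) - (((k + q * j : ℕ) : ℝ) + 1)| := by
        rw [hdiff, abs_mul, Nat.abs_cast]; gcongr

lemma sum_range_mul_eq_sum_sum (f : ℕ → ℝ) (m q : ℕ) :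
    ∑ n ∈ range (m * q), f n = ∑ k : Fin q, ∑ r : Fin m, f (k + q * r) := by
  rw [sum_range, ← (finProdFinEquiv (m := m) (n := q)).sum_comp, Fintype.sum_prod_type,
    sum_comm]
  rfl

theorem mul_sum_sq_coeff_le_sum_sq_eval {m t : ℕ} (hm : 1 ≤ m) (ht : m ≤ t) {p : ℝ[X]}
    (hp : p ∈ degreeLT ℝ m) :
    t * ∑ i : Fin m, p.coeff i ^ 2 ≤
      2 * m ^ 3 * ((2 * m) ^ (m - 1)) ^ 2 * ∑ j : Fin t, p.eval (((j : ℕ) : ℝ) + 1) ^ 2 := by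
  set q := t / m
  set c : ℝ := m ^ 2 * ((2 * m) ^ (m - 1)) ^ 2
  set S := ∑ i : Fin m, p.coeff i ^ 2
  set f : ℕ → ℝ := fun n => p.eval ((n : ℝ) + 1) ^ 2
  have hq : 1 ≤ q := (Nat.one_le_div_iff hm).mpr ht
  have hmq : m * q ≤ t := Nat.mul_div_le t m
  have htq : (t : ℝ) ≤ 2 * m * q := by
    have : t < m * (q + 1) := Nat.lt_mul_div_succ t hm
    exact_mod_cast (show t ≤ 2 * m * q by nlinarith)
  have hblock (k : Fin q) : S ≤ c * ∑ r : Fin m, f (k + q * r) :=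
    sum_sq_coeff_le_of_separated hp fun _ _ hjr =>
      one_add_abs_le_mul_abs_sub_of_progression k.isLt hjr
  have hsum : q * S ≤ c * ∑ j : Fin t, f j :=
    calc q * S = ∑ _k : Fin q, S := by rw [sum_const, card_univ, Fintype.card_fin, nsmul_eq_mul]
      _ ≤ ∑ k : Fin q, c * ∑ r : Fin m, f (k + q * r) := sum_le_sum fun k _ => hblock k
      _ = c * ∑ n ∈ range (m * q), f n := by rw [sum_range_mul_eq_sum_sum, mul_sum]
      _ ≤ c * ∑ n ∈ range t, f n := by gcongr
      _ = c * ∑ j : Fin t, f j := by rw [sum_range]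
  calc (t : ℝ) * S ≤ 2 * m * (q * S) := by
        rw [← mul_assoc]; exact mul_le_mul_of_nonneg_right htq (sum_nonneg fun _ _ => sq_nonneg _)
    _ ≤ 2 * m * (c * ∑ j : Fin t, f j) := by gcongr
    _ = _ := by ring

lemma sum_sq_mulVec_leastSquares_le {ι κ : Type*} [Fintype ι] [Fintype κ] [DecidableEq κ]
    (A : Matrix ι κ ℝ) (θ : ι → ℝ) :
    ∑ j, (A *ᵥ ((Aᵀ * A)⁻¹ *ᵥ (Aᵀ *ᵥ θ))) j ^ 2 ≤ ∑ j, θ j ^ 2 := by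
  by_cases hA : IsUnit (Aᵀ * A).det
  swap
  · simpa [nonsing_inv_apply_not_isUnit _ hA] using sum_nonneg fun j _ => sq_nonneg (θ j)
  set u := A *ᵥ ((Aᵀ * A)⁻¹ *ᵥ (Aᵀ *ᵥ θ))
  have hnormal : Aᵀ *ᵥ u = Aᵀ *ᵥ θ := by
    rw [mulVec_mulVec, mulVec_mulVec, mul_nonsing_inv _ hA, one_mulVec]
  have hproj : u ⬝ᵥ u = θ ⬝ᵥ u := by
    simp only [u, dotProduct_mulVec, ← mulVec_transpose, hnormal]
  have hcs : (θ ⬝ᵥ u) ^ 2 ≤ (∑ j, θ j ^ 2) * ∑ j, u j ^ 2 := sum_mul_sq_le_sq_mul_sq _ _ _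
  have huu : u ⬝ᵥ u = ∑ j, u j ^ 2 := by simp only [dotProduct, sq]
  rw [← hproj, huu] at hcs
  nlinarith [sum_nonneg fun j (_ : j ∈ univ) => sq_nonneg (u j),
    sum_nonneg fun j (_ : j ∈ univ) => sq_nonneg (θ j)]

/-- The OLS coefficients of polynomial regression on a uniformly
bounded sequence are bounded by a constant depending only on `m` and `B`:
`‖(X_tᵀ X_t)⁻¹ X_tᵀ θ‖₂ ≤ C` whenever `t ≥ m` and `‖θ‖_∞ ≤ B`. -/
theorem stmt15 (m : ℕ) (hm : 1 ≤ m) (B : ℝ) (hB : 0 < B) :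
    ∃ C : ℝ, 0 < C ∧ ∀ t : ℕ, m ≤ t → ∀ θ : Fin t → ℝ, (∀ i, |θ i| ≤ B) →
      Real.sqrt (∑ j, ((((designMatR t m)ᵀ * designMatR t m)⁻¹).mulVec
        ((designMatR t m)ᵀ.mulVec θ) j) ^ 2) ≤ C := by
  set c : ℝ := 2 * m ^ 3 * ((2 * m) ^ (m - 1)) ^ 2
  have hc : 0 < c := by positivity
  refine ⟨√c * B, by positivity, fun t ht θ hθ => ?_⟩
  set b := ((designMatR t m)ᵀ * designMatR t m)⁻¹ *ᵥ ((designMatR t m)ᵀ *ᵥ θ)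
  set p := (degreeLTEquiv ℝ m).symm b
  have hvec : degreeLTEquiv ℝ m p = b := (degreeLTEquiv ℝ m).apply_symm_apply b
  have hcoeff (i : Fin m) : (p : ℝ[X]).coeff i = b i := congrFun hvec i
  have hfit (j : Fin t) : (designMatR t m *ᵥ b) j = (p : ℝ[X]).eval (((j : ℕ) : ℝ) + 1) := by
    rw [eval_eq_sum_degreeLTEquiv p.2]
    simp [p, hvec, mulVec, dotProduct, designMatR, mul_comm]
  have hθ2 : ∑ j, θ j ^ 2 ≤ t * B ^ 2 := by
    simpa using sum_le_sum fun j (_ : j ∈ univ) =>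
      sq_le_sq' (abs_le.mp (hθ j)).1 (abs_le.mp (hθ j)).2
  have hkey := mul_sum_sq_coeff_le_sum_sq_eval hm ht p.2
  simp only [hcoeff, ← hfit] at hkey
  have hls := sum_sq_mulVec_leastSquares_le (designMatR t m) θ
  have ht0 : (0 : ℝ) < t := by exact_mod_cast hm.trans ht
  have hb : ∑ i, b i ^ 2 ≤ c * B ^ 2 := by
    refine le_of_mul_le_mul_left ?_ ht0
    calc (t : ℝ) * ∑ i, b i ^ 2 ≤ c * ∑ j, (designMatR t m *ᵥ b) j ^ 2 := hkey
      _ ≤ c * (t * B ^ 2) := by gcongr; exact hls.trans hθ2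
      _ = t * (c * B ^ 2) := by ring
  calc √(∑ i, b i ^ 2) ≤ √(c * B ^ 2) := Real.sqrt_le_sqrt hb
    _ = √c * B := by rw [Real.sqrt_mul hc.le, Real.sqrt_sq hB.le]
end
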